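/- arXiv:2001.06478 — 3 statements merged into one kernel-verified Lean document; each statement's English description precedes it below -/
import Mathlib

section
/- Let C be a free abelian group with basis B on which an involution τ acts freely, and let C* = Hom(C, ℤ) with the dual action τ^♯ defined by (τ^♯φ)(c) = φ(τc). Then ker(1+τ^♯) = im(1−τ^♯) and ker(1−τ^♯) = im(1+τ^♯) in C*. -/
/-!
Choose a set `S` of representatives of the orbits `{b, τ b}`. A cocycle `φ` (with
`φ ∘ τ = ∓φ`) is then the coboundary of `ψ`, the restriction of `φ` to the basis
elements in `S`: on `b ∈ S` only `ψ` contributes, and on `b ∉ S` only `±ψ ∘ τ`.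
Since `Hom(B →₀ A, M) ≃ (B → Hom(A, M))` turns `τ^♯` into precomposition with `τ`, it
suffices to do this for functions on `B`.
-/

section

open Function

variable {B : Type*} {e : B → B}

theorem Function.Involutive.exists_preimage_eq_compl (he : Involutive e)
    (hfree : ∀ b, e b ≠ b) : ∃ S : Set B, e ⁻¹' S = Sᶜ := by
  let _ : LinearOrder B := WellOrderingRel.isWellOrder.linearOrder
  refine ⟨{b | b < e b}, Set.ext fun b => ?_⟩
  simp only [Set.mem_preimage, Set.mem_ofPred_eq, Set.mem_compl_iff, he b, not_lt]
  exact ⟨le_of_lt, fun h => lt_of_le_of_ne h (hfree b)⟩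

section Functions

variable {M : Type*} [AddCommGroup M]

theorem Function.Involutive.add_comp_eq_zero_iff (he : Involutive e)
    (hfree : ∀ b, e b ≠ b) {f : B → M} : f + f ∘ e = 0 ↔ ∃ g : B → M, f = g - g ∘ e := by
  constructor
  · intro hf
    obtain ⟨S, hS⟩ := he.exists_preimage_eq_compl hfree
    refine ⟨S.indicator f, funext fun b => ?_⟩
    have hSb : e b ∈ S ↔ b ∉ S := Set.ext_iff.mp hS b
    have hfb : f b + f (e b) = 0 := congrFun hf b
    by_cases hb : b ∈ S
    · simp [hb, hSb]
    · simpa [hb, hSb.mpr hb] using eq_neg_of_add_eq_zero_left hfb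
  · rintro ⟨g, rfl⟩
    ext b
    simp [he b]

theorem Function.Involutive.sub_comp_eq_zero_iff (he : Involutive e)
    (hfree : ∀ b, e b ≠ b) {f : B → M} : f - f ∘ e = 0 ↔ ∃ g : B → M, f = g + g ∘ e := by
  constructor
  · intro hf
    obtain ⟨S, hS⟩ := he.exists_preimage_eq_compl hfree
    refine ⟨S.indicator f, funext fun b => ?_⟩
    have hSb : e b ∈ S ↔ b ∉ S := Set.ext_iff.mp hS b
    have hfb : f b - f (e b) = 0 := congrFun hf b
    by_cases hb : b ∈ S
    · simp [hb, hSb]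
    · simp [hb, hSb.mpr hb, sub_eq_zero.mp hfb]
  · rintro ⟨g, rfl⟩
    ext b
    simp [he b, add_comm]

end Functions

section Dual

theorem Finsupp.liftAddHom_comp_mapDomain {α A M : Type*} [AddCommMonoid A] [AddCommMonoid M]
    (F : α → A →+ M) (f : B → α) :
    (liftAddHom F).comp (mapDomain.addMonoidHom f) = liftAddHom (F ∘ f) :=
  addHom_ext fun b a => by simp [mapDomain.addMonoidHom, mapDomain_single]

variable {A M : Type*} [AddCommMonoid A] [AddCommGroup M]

theorem Function.Involutive.add_comp_mapDomain_eq_zero_iff (he : Involutive e)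
    (hfree : ∀ b, e b ≠ b) (φ : (B →₀ A) →+ M) :
    φ + φ.comp (Finsupp.mapDomain.addMonoidHom e) = 0 ↔
      ∃ ψ : (B →₀ A) →+ M, φ = ψ - ψ.comp (Finsupp.mapDomain.addMonoidHom e) := by
  obtain ⟨f, rfl⟩ := Finsupp.liftAddHom.surjective φ
  simp_rw [Finsupp.liftAddHom.surjective.exists, Finsupp.liftAddHom_comp_mapDomain,
    ← map_add, ← map_sub, map_eq_zero_iff _ Finsupp.liftAddHom.injective,
    Finsupp.liftAddHom.injective.eq_iff]
  exact he.add_comp_eq_zero_iff hfree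

theorem Function.Involutive.sub_comp_mapDomain_eq_zero_iff (he : Involutive e)
    (hfree : ∀ b, e b ≠ b) (φ : (B →₀ A) →+ M) :
    φ - φ.comp (Finsupp.mapDomain.addMonoidHom e) = 0 ↔
      ∃ ψ : (B →₀ A) →+ M, φ = ψ + ψ.comp (Finsupp.mapDomain.addMonoidHom e) := by
  obtain ⟨f, rfl⟩ := Finsupp.liftAddHom.surjective φ
  simp_rw [Finsupp.liftAddHom.surjective.exists, Finsupp.liftAddHom_comp_mapDomain,
    ← map_add, ← map_sub, map_eq_zero_iff _ Finsupp.liftAddHom.injective,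
    Finsupp.liftAddHom.injective.eq_iff]
  exact he.sub_comp_eq_zero_iff hfree

end Dual

end

/-- Dual exactness: for `C` free abelian on a basis `B` with fixed-point-free involution,
and `C* = Hom(C, ℤ)` with dual action `τ^♯φ = φ ∘ τ`, one has
`ker(1+τ^♯) = im(1−τ^♯)` and `ker(1−τ^♯) = im(1+τ^♯)`. -/
theorem stmt1 (B : Type*) (e : B → B)
    (hinv : Function.Involutive e) (hfree : ∀ b, e b ≠ b) :
    (∀ φ : (B →₀ ℤ) →+ ℤ,
      φ + φ.comp (Finsupp.mapDomain.addMonoidHom e) = 0 ↔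
        ∃ ψ : (B →₀ ℤ) →+ ℤ, φ = ψ - ψ.comp (Finsupp.mapDomain.addMonoidHom e)) ∧
    (∀ φ : (B →₀ ℤ) →+ ℤ,
      φ - φ.comp (Finsupp.mapDomain.addMonoidHom e) = 0 ↔
        ∃ ψ : (B →₀ ℤ) →+ ℤ, φ = ψ + ψ.comp (Finsupp.mapDomain.addMonoidHom e)) :=
  ⟨hinv.add_comp_mapDomain_eq_zero_iff hfree, hinv.sub_comp_mapDomain_eq_zero_iff hfree⟩
end

section
/- Combining the previous identities: ∂(vw(σ₁ × σ₂)) = τ_♯( w( τ_♯(σ₁ × σ₂) ) ) − v(σ₁ × σ₂) + vw(∂(σ₁ × σ₂)) for any oriented cell σ₁ × σ₂ of the deleted product. -/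
/-- The bilinear product of chains: `fprod x y = Σ x_a y_b (a × b)`. -/
noncomputable def fprod {S : Type*} (x y : S →₀ ℤ) : (S × S) →₀ ℤ :=
  x.sum fun a n => y.sum fun b k => Finsupp.single (a, b) (n * k)

/-!
Both sides are evaluated on the generator `a × b`. Expanding `∂(vw(a × b))` with the cone
identities `∂(va) = a − v∂a` and `∂(wb) = b − w∂b` gives four terms. The term
`(−1)^{dim a} (a × wb)` is `τ_♯ w τ_♯ (a × b)`, because the two Koszul signs multiply to
`(−1)^{dim a}`; the term `va × b` is `v(a × b)`; and the remaining two terms are `vw(∂(a × b))`,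
since `vw` carries the sign `−(−1)^{dim a}` on the faces `∂a × b` of dimension one less.
-/

section fprod

variable {S : Type*}

@[simp]
lemma fprod_apply (x y : S →₀ ℤ) (p : S × S) : fprod x y p = x p.1 * y p.2 := by
  classical
  have hsingle (a b : S) (n k : ℤ) :
      Finsupp.single (a, b) (n * k) p = Finsupp.single a n p.1 * Finsupp.single b k p.2 := by
    simp only [Finsupp.single_apply, Prod.ext_iff]
    split_ifs <;> simp_all
  have hsum (z : S →₀ ℤ) (c : S) : (z.sum fun a n => Finsupp.single a n c) = z c := by
    rw [← Finsupp.sum_apply, Finsupp.sum_single]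
  simp only [fprod, Finsupp.sum_apply, hsingle, ← Finsupp.mul_sum, ← Finsupp.sum_mul, hsum]

lemma fprod_add_left (x₁ x₂ y : S →₀ ℤ) :
    fprod (x₁ + x₂) y = fprod x₁ y + fprod x₂ y := by
  ext; simp [add_mul]

lemma fprod_add_right (x y₁ y₂ : S →₀ ℤ) :
    fprod x (y₁ + y₂) = fprod x y₁ + fprod x y₂ := by
  ext; simp [mul_add]

lemma fprod_sub_left (x₁ x₂ y : S →₀ ℤ) :
    fprod (x₁ - x₂) y = fprod x₁ y - fprod x₂ y := by
  ext; simp [sub_mul]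

lemma fprod_sub_right (x y₁ y₂ : S →₀ ℤ) :
    fprod x (y₁ - y₂) = fprod x y₁ - fprod x y₂ := by
  ext; simp [mul_sub]

@[simp]
lemma fprod_zero_left (y : S →₀ ℤ) : fprod 0 y = 0 := by
  ext; simp

@[simp]
lemma fprod_zero_right (x : S →₀ ℤ) : fprod x 0 = 0 := by
  ext; simp

lemma fprod_single_single (a b : S) (m n : ℤ) :
    fprod (Finsupp.single a m) (Finsupp.single b n) = Finsupp.single (a, b) (m * n) := by
  classical
  ext ⟨a', b'⟩
  simp only [fprod_apply, Finsupp.single_apply, Prod.mk.injEq]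
  split_ifs <;> simp_all

lemma support_fprod_subset (x y : S →₀ ℤ) :
    (fprod x y).support ⊆ x.support ×ˢ y.support := by
  intro p hp
  rw [Finsupp.mem_support_iff, fprod_apply] at hp
  exact Finset.mem_product.2
    ⟨Finsupp.mem_support_iff.2 (left_ne_zero_of_mul hp),
      Finsupp.mem_support_iff.2 (right_ne_zero_of_mul hp)⟩

lemma mapDomain_prodMap_fprod {T : Type*} (f g : S → T) (x y : S →₀ ℤ) :
    Finsupp.mapDomain (Prod.map f g) (fprod x y)
      = fprod (Finsupp.mapDomain f x) (Finsupp.mapDomain g y) := by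
  induction x using Finsupp.induction_linear with
  | zero => simp
  | add x₁ x₂ h₁ h₂ =>
    rw [fprod_add_left, Finsupp.mapDomain_add, h₁, h₂, Finsupp.mapDomain_add, fprod_add_left]
  | single a m =>
    induction y using Finsupp.induction_linear with
    | zero => simp
    | add y₁ y₂ h₁ h₂ =>
      rw [fprod_add_right, Finsupp.mapDomain_add, h₁, h₂, Finsupp.mapDomain_add (f := g),
        fprod_add_right]
    | single b n => simp only [fprod_single_single, Finsupp.mapDomain_single, Prod.map_apply]

end fprod

lemma AddMonoidHom.eq_zsmul_mapDomain {α β : Type*} (F : (α →₀ ℤ) →+ (β →₀ ℤ)) (h : α → β)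
    (c : ℤ) {z : α →₀ ℤ}
    (hF : ∀ p ∈ z.support, F (Finsupp.single p 1) = c • Finsupp.single (h p) 1) :
    F z = c • Finsupp.mapDomain h z := by
  conv_lhs => rw [← Finsupp.sum_single z]
  rw [map_finsuppSum, Finsupp.mapDomain, Finsupp.smul_sum]
  refine Finsupp.sum_congr fun p hp => ?_
  rw [← Finsupp.smul_single_one, map_zsmul, hF p hp, smul_comm, Finsupp.smul_single_one]

section Chains

variable {S : Type*}

def IsProductBoundary (dim : S → ℕ) (d : (S →₀ ℤ) →+ (S →₀ ℤ))
    (D : ((S × S) →₀ ℤ) →+ ((S × S) →₀ ℤ)) : Prop :=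
  ∀ a b : S, D (Finsupp.single (a, b) 1)
    = fprod (d (Finsupp.single a 1)) (Finsupp.single b 1)
      + ((-1 : ℤ) ^ dim a) • fprod (Finsupp.single a 1) (d (Finsupp.single b 1))

def IsCone (d : (S →₀ ℤ) →+ (S →₀ ℤ)) (c : S → S) : Prop :=
  ∀ a : S, d (Finsupp.single (c a) 1)
    = Finsupp.single a 1 - Finsupp.mapDomain c (d (Finsupp.single a 1))

def IsJoin (dim : S → ℕ) (cv cw : S → S)
    (VW : ((S × S) →₀ ℤ) →+ ((S × S) →₀ ℤ)) : Prop :=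
  ∀ a b : S, VW (Finsupp.single (a, b) 1) = ((-1 : ℤ) ^ dim a) • Finsupp.single (cv a, cw b) 1

def IsSignedSwap (dim : S → ℕ) (T : ((S × S) →₀ ℤ) →+ ((S × S) →₀ ℤ)) : Prop :=
  ∀ a b : S,
    T (Finsupp.single (a, b) 1) = ((-1 : ℤ) ^ (dim a * dim b)) • Finsupp.single (b, a) 1

variable {dim : S → ℕ} {d : (S →₀ ℤ) →+ (S →₀ ℤ)} {cv cw : S → S}
  {D T VW : ((S × S) →₀ ℤ) →+ ((S × S) →₀ ℤ)}

lemma IsJoin.map_fprod (hVW : IsJoin dim cv cw VW) {x y : S →₀ ℤ} {s : ℤ}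
    (hx : ∀ a ∈ x.support, (-1 : ℤ) ^ dim a = s) :
    VW (fprod x y) = s • fprod (Finsupp.mapDomain cv x) (Finsupp.mapDomain cw y) := by
  rw [← mapDomain_prodMap_fprod]
  refine VW.eq_zsmul_mapDomain _ s fun p hp => ?_
  rw [hVW, hx p.1 (Finset.mem_product.1 (support_fprod_subset x y hp)).1]
  rfl

lemma boundary_join_single (hD : IsProductBoundary dim d D) (hv : IsCone d cv) (hw : IsCone d cw)
    (hdimv : ∀ a : S, dim (cv a) = dim a + 1) (hVW : IsJoin dim cv cw VW) (a b : S) :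
    D (VW (Finsupp.single (a, b) 1))
      = (-1 : ℤ) ^ dim a • Finsupp.single (a, cw b) 1 - Finsupp.single (cv a, b) 1
        - (-1 : ℤ) ^ dim a
          • fprod (Finsupp.mapDomain cv (d (Finsupp.single a 1))) (Finsupp.single (cw b) 1)
        + fprod (Finsupp.single (cv a) 1) (Finsupp.mapDomain cw (d (Finsupp.single b 1))) := by
  rw [hVW, map_zsmul, hD, hv, hw, hdimv, fprod_sub_left, fprod_sub_right, fprod_single_single,
    fprod_single_single, pow_succ, smul_add, smul_smul, mul_neg_one, mul_neg, ← pow_add,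
    ← two_mul, pow_mul, neg_one_sq, one_pow, mul_one]
  module

lemma join_boundary_single
    (hd : ∀ a : S, ∀ b ∈ (d (Finsupp.single a 1)).support, dim b + 1 = dim a)
    (hD : IsProductBoundary dim d D) (hVW : IsJoin dim cv cw VW) (a b : S) :
    VW (D (Finsupp.single (a, b) 1))
      = -((-1 : ℤ) ^ dim a
          • fprod (Finsupp.mapDomain cv (d (Finsupp.single a 1))) (Finsupp.single (cw b) 1))
        + fprod (Finsupp.single (cv a) 1) (Finsupp.mapDomain cw (d (Finsupp.single b 1))) := by
  have hleft :
      ∀ a' ∈ (d (Finsupp.single a 1)).support, (-1 : ℤ) ^ dim a' = -(-1) ^ dim a := by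
    intro a' ha'
    rw [← hd a a' ha', pow_succ, mul_neg_one, neg_neg]
  have hright :
      ∀ a' ∈ (Finsupp.single a (1 : ℤ)).support, (-1 : ℤ) ^ dim a' = (-1) ^ dim a := by
    intro a' ha'
    rw [Finset.mem_singleton.1 (Finsupp.support_single_subset ha')]
  rw [hD, map_add, map_zsmul, hVW.map_fprod hleft, hVW.map_fprod hright, Finsupp.mapDomain_single,
    Finsupp.mapDomain_single, smul_smul, ← pow_add, ← two_mul, pow_mul, neg_one_sq, one_pow,
    one_smul, neg_smul]

lemma swap_cone_swap_single (hT : IsSignedSwap dim T) (hdimw : ∀ a : S, dim (cw a) = dim a + 1)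
    (a b : S) :
    T (Finsupp.mapDomain (fun p : S × S => (cw p.1, p.2)) (T (Finsupp.single (a, b) 1)))
      = (-1 : ℤ) ^ dim a • Finsupp.single (a, cw b) 1 := by
  rw [hT, Finsupp.mapDomain_smul, Finsupp.mapDomain_single, map_zsmul, hT, hdimw, smul_smul,
    ← pow_add]
  congr 1
  rw [show dim a * dim b + (dim b + 1) * dim a = dim a + 2 * (dim a * dim b) by ring, pow_add,
    pow_mul, neg_one_sq, one_pow, mul_one]

end Chains

/-- Combining the coning identities:
`∂(vw(σ₁ × σ₂)) = τ_♯(w(τ_♯(σ₁ × σ₂))) − v(σ₁ × σ₂) + vw(∂(σ₁ × σ₂))`, where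
`v(a × b) = va × b`, `w(a × b) = wa × b`, `vw(a × b) = (−1)^{dim a} (va × wb)`,
`τ_♯` is the Koszul-signed factor exchange and `∂` the product boundary. -/
theorem stmt11 (S : Type*) (dim : S → ℕ)
    (d : (S →₀ ℤ) →+ (S →₀ ℤ))
    (hd : ∀ a : S, ∀ b ∈ (d (Finsupp.single a 1)).support, dim b + 1 = dim a)
    (cv cw : S → S)
    (hdimv : ∀ a : S, dim (cv a) = dim a + 1)
    (hdimw : ∀ a : S, dim (cw a) = dim a + 1)
    (hconev : ∀ a : S, d (Finsupp.single (cv a) 1)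
      = Finsupp.single a 1 - Finsupp.mapDomain cv (d (Finsupp.single a 1)))
    (hconew : ∀ a : S, d (Finsupp.single (cw a) 1)
      = Finsupp.single a 1 - Finsupp.mapDomain cw (d (Finsupp.single a 1)))
    (D : ((S × S) →₀ ℤ) →+ ((S × S) →₀ ℤ))
    (hD : ∀ a b : S, D (Finsupp.single (a, b) 1)
      = fprod (d (Finsupp.single a 1)) (Finsupp.single b 1)
        + ((-1 : ℤ) ^ dim a) • fprod (Finsupp.single a 1) (d (Finsupp.single b 1)))
    (T : ((S × S) →₀ ℤ) →+ ((S × S) →₀ ℤ))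
    (hT : ∀ a b : S, T (Finsupp.single (a, b) 1)
      = ((-1 : ℤ) ^ (dim a * dim b)) • Finsupp.single (b, a) 1)
    (V : ((S × S) →₀ ℤ) →+ ((S × S) →₀ ℤ))
    (hV : V = Finsupp.mapDomain.addMonoidHom fun p : S × S => (cv p.1, p.2))
    (W : ((S × S) →₀ ℤ) →+ ((S × S) →₀ ℤ))
    (hW : W = Finsupp.mapDomain.addMonoidHom fun p : S × S => (cw p.1, p.2))
    (VW : ((S × S) →₀ ℤ) →+ ((S × S) →₀ ℤ))
    (hVW : ∀ a b : S, VW (Finsupp.single (a, b) 1)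
      = ((-1 : ℤ) ^ dim a) • Finsupp.single (cv a, cw b) 1) :
    ∀ a b : S,
      D (VW (Finsupp.single (a, b) 1))
        = T (W (T (Finsupp.single (a, b) 1)))
          - V (Finsupp.single (a, b) 1)
          + VW (D (Finsupp.single (a, b) 1)) := by
  intro a b
  subst hV hW
  rw [boundary_join_single hD hconev hconew hdimv hVW, join_boundary_single hd hD hVW,
    Finsupp.mapDomain.addMonoidHom_apply, swap_cone_swap_single hT hdimw,
    Finsupp.mapDomain.addMonoidHom_apply, Finsupp.mapDomain_single]
  abel
end

section
/- Certificate for torsion cohomology classes, converse direction: Let C be a chain complex of finitely generated free abelian groups, and let φ be an i-cocycle such that φ(z) = 0 for every i-cycle z but [φ] ≠ 0 in H^i(Hom(C,ℤ)). Then there exist an integer n > 1, an i-chain c, and an (i−1)-cycle d such that ∂c = n·d and φ(c) ≢ 0 (mod n). -/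
/-!
Since `φ` vanishes on cycles, it is a functional `f` on the group of boundaries `B ⊆ C₀`, and
`[φ] = 0` means exactly that `f` extends to `C₀`. Put `B ⊆ C₀` in Smith normal form, with bases
`bN i = aᵢ • bM i`. If every `aᵢ` divides `f (bN i)`, setting `ψ (bM i) = f (bN i) / aᵢ` extends
`f`; otherwise some `c` with `∂c = bN i` and `e = bM i` (up to sign) is the certificate with
`n = |aᵢ|`, and `e` is a cycle because `n • ∂e = ∂∂c = 0` in a torsion-free group.
-/

theorem Submodule.exists_extension_of_dvd {M : Type*} [AddCommGroup M] [Module.Free ℤ M]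
    [Module.Finite ℤ M] (B : Submodule ℤ M) (f : B →ₗ[ℤ] ℤ)
    (hdvd : ∀ (n : ℤ) (e : M) (b : B), 1 < n → (b : M) = n • e → n ∣ f b) :
    ∃ ψ : M →ₗ[ℤ] ℤ, ψ ∘ₗ B.subtype = f := by
  obtain ⟨k, snf⟩ := B.smithNormalForm (Module.Free.chooseBasis ℤ M)
  have ha : ∀ i, snf.a i ∣ f (snf.bN i) := by
    intro i
    rw [← abs_dvd]
    rcases lt_or_ge 1 |snf.a i| with h | h
    · refine hdvd _ ((snf.a i).sign • snf.bM (snf.f i)) _ h ?_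
      rw [smul_smul, mul_comm, Int.sign_mul_abs, snf.snf]
    · have ha0 : snf.a i ≠ 0 := fun h0 ↦
        snf.bN.ne_zero i (Subtype.ext (by rw [snf.snf, h0, zero_smul, Submodule.coe_zero]))
      rw [le_antisymm h (Int.one_le_abs ha0)]
      exact one_dvd _
  refine ⟨snf.bM.constr ℤ (Function.extend snf.f (fun i ↦ f (snf.bN i) / snf.a i) 0),
    snf.bN.ext fun i ↦ ?_⟩
  rw [LinearMap.comp_apply, Submodule.subtype_apply, snf.snf, map_zsmul, Module.Basis.constr_basis,
    snf.f.injective.extend_apply, smul_eq_mul, Int.mul_ediv_cancel' (ha i)]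

theorem LinearMap.exists_comp_eq_of_dvd {N M : Type*} [AddCommGroup N] [AddCommGroup M]
    [Module.Free ℤ M] [Module.Finite ℤ M] (D : N →ₗ[ℤ] M) (φ : N →ₗ[ℤ] ℤ)
    (hker : LinearMap.ker D ≤ LinearMap.ker φ)
    (hdvd : ∀ (n : ℤ) (e : M) (c : N), 1 < n → D c = n • e → n ∣ φ c) :
    ∃ ψ : M →ₗ[ℤ] ℤ, ψ ∘ₗ D = φ := by
  let f : LinearMap.range D →ₗ[ℤ] ℤ := (LinearMap.ker D).liftQ φ hker ∘ₗ D.quotKerEquivRange.symm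
  have hf : ∀ c, f ⟨D c, D.mem_range_self c⟩ = φ c := fun c ↦ by
    rw [LinearMap.comp_apply, LinearEquiv.coe_coe, LinearMap.quotKerEquivRange_symm_apply_image,
      Submodule.mkQ_apply, Submodule.liftQ_apply]
  obtain ⟨ψ, hψ⟩ := (LinearMap.range D).exists_extension_of_dvd f fun n e ⟨_, c, hc⟩ hn he ↦ by
    subst hc
    simpa only [hf] using hdvd n e c hn he
  exact ⟨ψ, LinearMap.ext fun c ↦ (LinearMap.congr_fun hψ ⟨D c, D.mem_range_self c⟩).trans (hf c)⟩

theorem stmt13_general (C1 C0 Cm : Type*)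
    [AddCommGroup C1] [AddCommGroup C0] [AddCommGroup Cm]
    [Module.Free ℤ C0] [Module.Finite ℤ C0]
    [Module.Free ℤ Cm]
    (d1 : C1 →+ C0) (d0 : C0 →+ Cm)
    (hd10 : ∀ x, d0 (d1 x) = 0)
    (φ : C1 →+ ℤ)
    (hvanish : ∀ z : C1, d1 z = 0 → φ z = 0)
    (hnontriv : ¬ ∃ ψ : C0 →+ ℤ, ∀ x, φ x = ψ (d1 x)) :
    ∃ (n : ℤ) (c : C1) (e : C0),
      1 < n ∧ d0 e = 0 ∧ d1 c = n • e ∧ ¬ (n ∣ φ c) := by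
  by_contra! hcert
  have hcycle : ∀ (n : ℤ) (c : C1) (e : C0), 1 < n → d1 c = n • e → d0 e = 0 := by
    intro n c e hn he
    have h : n • d0 e = 0 := by rw [← map_zsmul, ← he, hd10]
    exact (smul_eq_zero.mp h).resolve_left (by omega)
  obtain ⟨ψ, hψ⟩ := d1.toIntLinearMap.exists_comp_eq_of_dvd φ.toIntLinearMap
    (fun z hz ↦ hvanish z hz)
    (fun n e c hn he ↦ hcert n c e hn (hcycle n c e hn he) he)
  exact hnontriv ⟨ψ.toAddMonoidHom, fun x ↦ (LinearMap.congr_fun hψ x).symm⟩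

/-- Certificate for torsion cohomology classes (converse direction): over a chain complex
of finitely generated free abelian groups, if the `i`-cocycle `φ` vanishes on all
`i`-cycles but `[φ] ≠ 0`, then there are `n > 1`, an `i`-chain `c` and an `(i−1)`-cycle
`e` with `∂c = n·e` and `φ(c) ≢ 0 (mod n)`. -/
theorem stmt13 (C2 C1 C0 Cm : Type*)
    [AddCommGroup C2] [AddCommGroup C1] [AddCommGroup C0] [AddCommGroup Cm]
    [Module.Free ℤ C2] [Module.Finite ℤ C2]
    [Module.Free ℤ C1] [Module.Finite ℤ C1]
    [Module.Free ℤ C0] [Module.Finite ℤ C0]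
    [Module.Free ℤ Cm] [Module.Finite ℤ Cm]
    (d2 : C2 →+ C1) (d1 : C1 →+ C0) (d0 : C0 →+ Cm)
    (hd21 : ∀ x, d1 (d2 x) = 0) (hd10 : ∀ x, d0 (d1 x) = 0)
    (φ : C1 →+ ℤ) (hcocycle : ∀ x, φ (d2 x) = 0)
    (hvanish : ∀ z : C1, d1 z = 0 → φ z = 0)
    (hnontriv : ¬ ∃ ψ : C0 →+ ℤ, ∀ x, φ x = ψ (d1 x)) :
    ∃ (n : ℤ) (c : C1) (e : C0),
      1 < n ∧ d0 e = 0 ∧ d1 c = n • e ∧ ¬ (n ∣ φ c) :=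
  stmt13_general C1 C0 Cm d1 d0 hd10 φ hvanish hnontriv
end
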